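/- The weakest liberal precondition of the loop is the infinite conjunction of the induction-iteration predicates: for every state s, (∀ i, P_i s) holds if and only if for every m, if the loop started in s exits after exactly m iterations (B (f^[k] s) for all k < m and ¬B (f^[m] s)) then Q (f^[m] s) holds. -/
import Mathlib

/-- The induction-iteration predicates: `P₀ s := (¬B s → Q s)` and
`P_{i+1} s := (B s → P_i (f s))`. -/
def iterPred {σ : Type*} (f : σ → σ) (B Q : σ → Prop) : ℕ → σ → Prop
  | 0 => fun s => ¬ B s → Q s
  | i + 1 => fun s => B s → iterPred f B Q i (f s)

lemma iterPred_iff {σ : Type*} (f : σ → σ) (B Q : σ → Prop) :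
    ∀ (i : ℕ) (s : σ), iterPred f B Q i s ↔
      ((∀ k < i, B (f^[k] s)) → ¬ B (f^[i] s) → Q (f^[i] s)) := by
  intro i
  induction i with
  | zero => intro s; simp [iterPred]
  | succ i ih =>
    intro s
    simp only [iterPred, ih (f s)]
    constructor
    · intro h hall hnb
      have hb : B s := hall 0 (Nat.succ_pos i)
      have := h hb (fun k hk => by
        have := hall (k + 1) (Nat.succ_lt_succ hk)
        simpa [Function.iterate_succ_apply] using this)
      simpa [Function.iterate_succ_apply] using
        this (by simpa [Function.iterate_succ_apply] using hnb)
    · intro h hb hall hnb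
      have := h (fun k hk => by
        cases k with
        | zero => simpa using hb
        | succ k =>
          have := hall k (Nat.lt_of_succ_lt_succ hk)
          simpa [Function.iterate_succ_apply] using this)
        (by simpa [Function.iterate_succ_apply] using hnb)
      simpa [Function.iterate_succ_apply] using this

/-- The weakest liberal precondition of the loop is the infinite conjunction of
the induction-iteration predicates: `(∀ i, P_i s)` holds iff for every `m`, if
the loop started in `s` exits after exactly `m` iterations then the exit state
satisfies `Q`. -/
theorem iterPred_wlp {σ : Type*} (f : σ → σ) (B Q : σ → Prop) (s : σ) :
    (∀ i : ℕ, iterPred f B Q i s) ↔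
      (∀ m : ℕ, (∀ k < m, B (f^[k] s)) → ¬ B (f^[m] s) → Q (f^[m] s)) := by
  simp only [iterPred_iff]
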